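/- Let (Ω, ℱ, ℙ) be a probability space and H: ℝⁿ × Ω → ℝⁿ with H(x, ·) integrable for each x. Suppose there is a set Ω̄ ⊆ Ω with ℙ(Ω̄) = 1 and a constant η̄ > 0 such that for every ω ∈ Ω̄, the map H(·, ω) is co-coercive on ℝⁿ with constant η(ω) ≥ η̄, i.e., (x - y)ᵀ(H(x,ω) - H(y,ω)) ≥ η(ω) ‖H(x,ω) - H(y,ω)‖² for all x, y. Then the expected-value map x ↦ 𝔼[H(x, ω)] is co-coercive on ℝⁿ with constant η̄. -/

import Mathlib

/-! With `D = H x · - H y ·`, almost surely `η̄ ‖D‖² ≤ ⟨x - y, D⟩`. The right side is integrable,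
so `‖D‖²` is too, and Jensen's inequality `‖𝔼 D‖² ≤ 𝔼 ‖D‖²` together with linearity of the
expectation turns the almost sure inequality into the one for `𝔼 D`. -/

open MeasureTheory

section

variable {Ω : Type*} [MeasurableSpace Ω] {μ : Measure Ω}

/-- `s` need not be measurable, so `μ s = 1` alone does not make `s` a.e.; the
null-measurability of `t` does. -/
theorem ae_of_subset_of_measure_eq_one [IsProbabilityMeasure μ] {s t : Set Ω}
    (ht : NullMeasurableSet t μ) (hst : s ⊆ t) (hs : μ s = 1) : ∀ᵐ ω ∂μ, ω ∈ t := by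
  rw [ae_mem_iff_measure_eq ht, measure_univ]
  exact le_antisymm prob_le_one (hs ▸ measure_mono hst)

theorem ae_le_of_forall_mem_of_measure_eq_one [IsProbabilityMeasure μ] {f g : Ω → ℝ}
    (hf : AEStronglyMeasurable f μ) (hg : AEStronglyMeasurable g μ) {s : Set Ω} (hs : μ s = 1)
    (hle : ∀ ω ∈ s, f ω ≤ g ω) : f ≤ᵐ[μ] g :=
  ae_of_subset_of_measure_eq_one (AEStronglyMeasurable.nullMeasurableSet_le hf hg) hle hs

theorem MeasureTheory.Integrable.of_nonneg_of_ae_mul_le {f g : Ω → ℝ} {c : ℝ} (hc : 0 < c)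
    (hf : AEStronglyMeasurable f μ) (hf0 : ∀ ω, 0 ≤ f ω) (hg : Integrable g μ)
    (hle : ∀ᵐ ω ∂μ, c * f ω ≤ g ω) : Integrable f μ := by
  refine (hg.const_mul c⁻¹).mono' hf ?_
  filter_upwards [hle] with ω hω
  rw [Real.norm_of_nonneg (hf0 ω), ← div_eq_inv_mul, le_div_iff₀' hc]
  exact hω

theorem sq_integral_le_integral_sq [IsProbabilityMeasure μ] {f : Ω → ℝ} (hf : Integrable f μ)
    (hf2 : Integrable (fun ω => f ω ^ 2) μ) : (∫ ω, f ω ∂μ) ^ 2 ≤ ∫ ω, f ω ^ 2 ∂μ :=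
  (Even.convexOn_pow even_two).map_integral_le (continuous_pow 2).continuousOn isClosed_univ
    (ae_of_all _ fun _ => trivial) hf hf2

theorem mul_sum_sq_integral_le_of_ae {ι : Type*} [Fintype ι] [IsProbabilityMeasure μ]
    {f : ι → Ω → ℝ} (a : ι → ℝ) {c : ℝ} (hc : 0 < c) (hf : ∀ i, Integrable (f i) μ)
    (hle : ∀ᵐ ω ∂μ, c * ∑ i, f i ω ^ 2 ≤ ∑ i, a i * f i ω) :
    c * ∑ i, (∫ ω, f i ω ∂μ) ^ 2 ≤ ∑ i, a i * ∫ ω, f i ω ∂μ := by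
  have hlin : Integrable (fun ω => ∑ i, a i * f i ω) μ :=
    integrable_finsetSum _ fun i _ => (hf i).const_mul (a i)
  have hsq : ∀ i, Integrable (fun ω => f i ω ^ 2) μ := by
    intro i
    refine Integrable.of_nonneg_of_ae_mul_le hc ((hf i).aestronglyMeasurable.pow 2)
      (fun ω => sq_nonneg _) hlin ?_
    filter_upwards [hle] with ω hω
    have hi : f i ω ^ 2 ≤ ∑ j, f j ω ^ 2 :=
      Finset.single_le_sum (fun j _ => sq_nonneg (f j ω)) (Finset.mem_univ i)
    nlinarith
  calc c * ∑ i, (∫ ω, f i ω ∂μ) ^ 2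
      ≤ c * ∫ ω, ∑ i, f i ω ^ 2 ∂μ := by
        rw [integral_finsetSum _ fun i _ => hsq i]
        gcongr with i
        exact sq_integral_le_integral_sq (hf i) (hsq i)
    _ ≤ ∫ ω, ∑ i, a i * f i ω ∂μ := by
        rw [← integral_const_mul]
        exact integral_mono_ae ((integrable_finsetSum _ fun i _ => hsq i).const_mul c) hlin hle
    _ = ∑ i, a i * ∫ ω, f i ω ∂μ := by
        rw [integral_finsetSum _ fun i _ => (hf i).const_mul (a i)]
        simp only [integral_const_mul]
end

theorem expectation_cocoercive
    {Ω : Type*} [MeasurableSpace Ω] (ℙ : Measure Ω) [IsProbabilityMeasure ℙ]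
    {n : ℕ} (H : (Fin n → ℝ) → Ω → (Fin n → ℝ))
    (hint : ∀ x i, Integrable (fun ω => H x ω i) ℙ)
    (Ωbar : Set Ω) (hΩbar : ℙ Ωbar = 1)
    (η : Ω → ℝ) (ηbar : ℝ) (hηbar : 0 < ηbar)
    (hη : ∀ ω ∈ Ωbar, ηbar ≤ η ω)
    (hcc : ∀ ω ∈ Ωbar, ∀ x y : Fin n → ℝ,
      η ω * ∑ i, (H x ω i - H y ω i) ^ 2 ≤ ∑ i, (x i - y i) * (H x ω i - H y ω i)) :
    ∀ x y : Fin n → ℝ,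
      ηbar * ∑ i, ((∫ ω, H x ω i ∂ℙ) - ∫ ω, H y ω i ∂ℙ) ^ 2 ≤
        ∑ i, (x i - y i) * ((∫ ω, H x ω i ∂ℙ) - ∫ ω, H y ω i ∂ℙ) := by
  intro x y
  have hdiff : ∀ i, Integrable (fun ω => H x ω i - H y ω i) ℙ :=
    fun i => (hint x i).sub (hint y i)
  have hae : ∀ᵐ ω ∂ℙ, ηbar * ∑ i, (H x ω i - H y ω i) ^ 2 ≤
      ∑ i, (x i - y i) * (H x ω i - H y ω i) := by
    refine ae_le_of_forall_mem_of_measure_eq_one (by fun_prop) (by fun_prop) hΩbar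
      fun ω hω => le_trans ?_ (hcc ω hω x y)
    exact mul_le_mul_of_nonneg_right (hη ω hω) (Finset.sum_nonneg fun i _ => sq_nonneg _)
  simp only [← integral_sub (hint x _) (hint y _)]
  exact mul_sum_sq_integral_le_of_ae (fun i => x i - y i) hηbar hdiff hae
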